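/- arXiv:1003.5776 — 8 statements merged into one kernel-verified Lean document; each statement's English description precedes it below -/
import Mathlib

section
/- Let μ₁, μ₂, μ₃ : I → ℝ be smooth functions with μ₂ > 0, satisfying μ₁' + 3 μ₂ μ₂' = 0, μ₂'' = μ₂³ + 2 μ₁ μ₂ + μ₂ μ₃², and 2 μ₂' μ₃ + μ₂ μ₃' = 0. Then there exist constants C₁, C₂, C₃ ∈ ℝ such that (1/2)(μ₂')² + (1/2) μ₂⁴ − C₁ μ₂² + C₂²/(2 μ₂²) = C₃/2 on I. -/
lemma const_on_Ioo {a b : ℝ} {f : ℝ → ℝ} (h : ∀ x ∈ Set.Ioo a b, HasDerivAt f 0 x)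
    {x y : ℝ} (hx : x ∈ Set.Ioo a b) (hy : y ∈ Set.Ioo a b) : f x = f y := by
  have := (convex_Ioo a b).norm_image_sub_le_of_norm_hasDerivWithin_le
    (f' := fun _ => (0 : ℝ)) (fun z hz => (h z hz).hasDerivWithinAt)
    (C := 0) (fun z _ => by simp) hx hy
  simp only [zero_mul, norm_le_zero_iff, sub_eq_zero] at this
  exact this.symm


/-- Conservation of energy for the Euler–Lagrange equations of conformal geodesics in `Q₄`:
if smooth `μ₁, μ₂, μ₃` with `μ₂ > 0` satisfy `μ₁' + 3 μ₂ μ₂' = 0`,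
`μ₂'' = μ₂³ + 2 μ₁ μ₂ + μ₂ μ₃²` and `2 μ₂' μ₃ + μ₂ μ₃' = 0` on an open interval, then
`(1/2)(μ₂')² + (1/2) μ₂⁴ − C₁ μ₂² + C₂²/(2 μ₂²) = C₃/2` for some constants `C₁, C₂, C₃`. -/
theorem stmt_2 (a b : ℝ) (μ₁ μ₂ μ₃ μ₁' μ₂' μ₂'' μ₃' : ℝ → ℝ)
    (hsmooth₁ : ContDiffOn ℝ (⊤ : ℕ∞) μ₁ (Set.Ioo a b))
    (hsmooth₂ : ContDiffOn ℝ (⊤ : ℕ∞) μ₂ (Set.Ioo a b))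
    (hsmooth₃ : ContDiffOn ℝ (⊤ : ℕ∞) μ₃ (Set.Ioo a b))
    (hpos : ∀ x ∈ Set.Ioo a b, 0 < μ₂ x)
    (hd₁ : ∀ x ∈ Set.Ioo a b, HasDerivAt μ₁ (μ₁' x) x)
    (hd₂ : ∀ x ∈ Set.Ioo a b, HasDerivAt μ₂ (μ₂' x) x)
    (hd₂' : ∀ x ∈ Set.Ioo a b, HasDerivAt μ₂' (μ₂'' x) x)
    (hd₃ : ∀ x ∈ Set.Ioo a b, HasDerivAt μ₃ (μ₃' x) x)
    (hODE₁ : ∀ x ∈ Set.Ioo a b, μ₁' x + 3 * μ₂ x * μ₂' x = 0)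
    (hODE₂ : ∀ x ∈ Set.Ioo a b, μ₂'' x = μ₂ x ^ 3 + 2 * μ₁ x * μ₂ x + μ₂ x * μ₃ x ^ 2)
    (hODE₃ : ∀ x ∈ Set.Ioo a b, 2 * μ₂' x * μ₃ x + μ₂ x * μ₃' x = 0) :
    ∃ C₁ C₂ C₃ : ℝ, ∀ x ∈ Set.Ioo a b,
      (1 / 2) * μ₂' x ^ 2 + (1 / 2) * μ₂ x ^ 4 - C₁ * μ₂ x ^ 2
        + C₂ ^ 2 / (2 * μ₂ x ^ 2) = C₃ / 2 := by

  rcases Set.eq_empty_or_nonempty (Set.Ioo a b) with hemp | ⟨x₀, hx₀⟩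
  · exact ⟨0, 0, 0, fun x hx => absurd hx (hemp ▸ Set.notMem_empty x)⟩
  set S := Set.Ioo a b with hS
  -- First conserved quantity
  have hg₁ : ∀ x ∈ S, HasDerivAt (fun t => μ₁ t + (3/2) * μ₂ t ^ 2) 0 x := by
    intro x hx
    have : HasDerivAt (fun t => μ₁ t + (3/2) * μ₂ t ^ 2)
        (μ₁' x + (3/2) * (2 * μ₂ x ^ 1 * μ₂' x)) x :=
      (hd₁ x hx).add (((hd₂ x hx).pow 2).const_mul _)
    convert this using 1
    linear_combination -(hODE₁ x hx)
  have hg₂ : ∀ x ∈ S, HasDerivAt (fun t => μ₂ t ^ 2 * μ₃ t) 0 x := by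
    intro x hx
    have : HasDerivAt (fun t => μ₂ t ^ 2 * μ₃ t)
        ((2 * μ₂ x ^ 1 * μ₂' x) * μ₃ x + μ₂ x ^ 2 * μ₃' x) x :=
      ((hd₂ x hx).pow 2).mul (hd₃ x hx)
    convert this using 1
    linear_combination -(μ₂ x * hODE₃ x hx)
  obtain ⟨C₁, hC₁⟩ : ∃ c : ℝ, c = μ₁ x₀ + (3/2) * μ₂ x₀ ^ 2 := ⟨_, rfl⟩
  obtain ⟨C₂, hC₂⟩ : ∃ c : ℝ, c = μ₂ x₀ ^ 2 * μ₃ x₀ := ⟨_, rfl⟩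
  have hμ₁ : ∀ x ∈ S, μ₁ x = C₁ - (3/2) * μ₂ x ^ 2 := by
    intro x hx
    have := const_on_Ioo hg₁ hx hx₀
    rw [hC₁]; linarith [this]
  have hμ₃ : ∀ x ∈ S, μ₂ x ^ 2 * μ₃ x = C₂ := fun x hx => (const_on_Ioo hg₂ hx hx₀).trans hC₂.symm
  -- Energy
  have hE : ∀ x ∈ S, HasDerivAt (fun t => (1/2) * μ₂' t ^ 2 + (1/2) * μ₂ t ^ 4
      - C₁ * μ₂ t ^ 2 + C₂ ^ 2 / (2 * μ₂ t ^ 2)) 0 x := by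
    intro x hx
    have hne : μ₂ x ≠ 0 := (hpos x hx).ne'
    have hne2 : (2 : ℝ) * μ₂ x ^ 2 ≠ 0 := by positivity
    have h1 : HasDerivAt (fun t => (1/2) * μ₂' t ^ 2) ((1/2) * (2 * μ₂' x ^ 1 * μ₂'' x)) x :=
      ((hd₂' x hx).pow 2).const_mul _
    have h2 : HasDerivAt (fun t => (1/2) * μ₂ t ^ 4) ((1/2) * (4 * μ₂ x ^ 3 * μ₂' x)) x :=
      ((hd₂ x hx).pow 4).const_mul _
    have h3 : HasDerivAt (fun t => C₁ * μ₂ t ^ 2) (C₁ * (2 * μ₂ x ^ 1 * μ₂' x)) x :=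
      ((hd₂ x hx).pow 2).const_mul _
    have h4 : HasDerivAt (fun t => 2 * μ₂ t ^ 2) (2 * (2 * μ₂ x ^ 1 * μ₂' x)) x :=
      ((hd₂ x hx).pow 2).const_mul _
    have h5 : HasDerivAt (fun t => C₂ ^ 2 / (2 * μ₂ t ^ 2))
        ((0 * (2 * μ₂ x ^ 2) - C₂ ^ 2 * (2 * (2 * μ₂ x ^ 1 * μ₂' x))) / (2 * μ₂ x ^ 2) ^ 2) x :=
      (hasDerivAt_const x (C₂ ^ 2)).div h4 hne2
    have := ((h1.add h2).sub h3).add h5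
    convert this using 1
    on_goal 1 => rfl
    on_goal 1 => rfl
    on_goal 1 => rfl
    have e1 := hODE₂ x hx
    have e2 := hμ₁ x hx
    have e3 := hμ₃ x hx
    have key : μ₂' x * μ₂'' x * μ₂ x ^ 3
        = 2 * C₁ * μ₂ x ^ 4 * μ₂' x - 2 * μ₂ x ^ 6 * μ₂' x + C₂ ^ 2 * μ₂' x := by
      rw [e1]
      linear_combination 2 * μ₂ x ^ 4 * μ₂' x * e2
        + μ₂' x * (μ₂ x ^ 2 * μ₃ x + C₂) * e3
    field_simp
    linear_combination (-2 : ℝ) * key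
  refine ⟨C₁, C₂, 2 * ((1/2) * μ₂' x₀ ^ 2 + (1/2) * μ₂ x₀ ^ 4 - C₁ * μ₂ x₀ ^ 2
      + C₂ ^ 2 / (2 * μ₂ x₀ ^ 2)), fun x hx => ?_⟩
  have := const_on_Ioo hE hx hx₀
  rw [this]; ring
end

section
/- Let μ₂ : I → ℝ be a non-constant smooth positive solution of (μ₂')² = −μ₂⁶ + 2C₁ μ₂⁴ + C₃ μ₂² − C₂² on an open interval I, with C₂ ≠ 0. Then the cubic P(t) = −t³ + 2C₁ t² + C₃ t − C₂² has two distinct positive real roots ξ₁ < ξ₂, and μ₂(s)² ∈ [ξ₁, ξ₂] for all s ∈ I. -/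
/-- If `μ₂` is a non-constant smooth positive solution of
`(μ₂')² = −μ₂⁶ + 2C₁μ₂⁴ + C₃μ₂² − C₂²` on an open interval, with `C₂ ≠ 0`, then the cubic
`P(t) = −t³ + 2C₁t² + C₃t − C₂²` has two distinct positive real roots `ξ₁ < ξ₂` and
`μ₂(s)² ∈ [ξ₁, ξ₂]` for all `s`. -/
theorem stmt_5 (a b : ℝ) (hab : a < b) (C₁ C₂ C₃ : ℝ) (hC₂ : C₂ ≠ 0) (μ₂ μ₂' : ℝ → ℝ)
    (hsmooth : ContDiffOn ℝ (⊤ : ℕ∞) μ₂ (Set.Ioo a b))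
    (hpos : ∀ s ∈ Set.Ioo a b, 0 < μ₂ s)
    (hd : ∀ s ∈ Set.Ioo a b, HasDerivAt μ₂ (μ₂' s) s)
    (hODE : ∀ s ∈ Set.Ioo a b,
      μ₂' s ^ 2 = -μ₂ s ^ 6 + 2 * C₁ * μ₂ s ^ 4 + C₃ * μ₂ s ^ 2 - C₂ ^ 2)
    (hnonconst : ¬∃ c : ℝ, ∀ s ∈ Set.Ioo a b, μ₂ s = c) :
    ∃ ξ₁ ξ₂ : ℝ, 0 < ξ₁ ∧ ξ₁ < ξ₂ ∧
      (-ξ₁ ^ 3 + 2 * C₁ * ξ₁ ^ 2 + C₃ * ξ₁ - C₂ ^ 2 = 0) ∧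
      (-ξ₂ ^ 3 + 2 * C₁ * ξ₂ ^ 2 + C₃ * ξ₂ - C₂ ^ 2 = 0) ∧
      ∀ s ∈ Set.Ioo a b, μ₂ s ^ 2 ∈ Set.Icc ξ₁ ξ₂ := by
  set P : ℝ → ℝ := fun t => -t ^ 3 + 2 * C₁ * t ^ 2 + C₃ * t - C₂ ^ 2 with hPdef
  have hPcont : Continuous P := by
    fun_prop
  -- `P` evaluated at `μ₂ s ^ 2` is `μ₂' s ^ 2`, hence nonnegative.
  have hPval : ∀ s ∈ Set.Ioo a b, P (μ₂ s ^ 2) = μ₂' s ^ 2 := by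
    intro s hs
    have := hODE s hs
    simp only [hPdef]
    ring_nf
    ring_nf at this
    linarith
  have hPnonneg : ∀ s ∈ Set.Ioo a b, 0 ≤ P (μ₂ s ^ 2) := by
    intro s hs
    rw [hPval s hs]; positivity
  -- Find a point where the derivative is nonzero (since μ₂ is nonconstant).
  have key : ∀ x y, x ∈ Set.Ioo a b → y ∈ Set.Ioo a b → x < y → μ₂ x ≠ μ₂ y →
      ∃ s₀ ∈ Set.Ioo a b, μ₂' s₀ ≠ 0 := by
    intro x y hx hy hxy hne
    have hsub : Set.Icc x y ⊆ Set.Ioo a b := fun z hz =>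
      ⟨lt_of_lt_of_le hx.1 hz.1, lt_of_le_of_lt hz.2 hy.2⟩
    have hcont : ContinuousOn μ₂ (Set.Icc x y) := fun z hz =>
      ((hd z (hsub hz)).continuousAt).continuousWithinAt
    obtain ⟨c, hc, hc'⟩ := exists_hasDerivAt_eq_slope μ₂ μ₂' hxy hcont
      (fun z hz => hd z (hsub ⟨le_of_lt hz.1, le_of_lt hz.2⟩))
    refine ⟨c, hsub ⟨le_of_lt hc.1, le_of_lt hc.2⟩, ?_⟩
    rw [hc']
    exact div_ne_zero (sub_ne_zero.mpr (Ne.symm hne)) (sub_ne_zero.mpr (ne_of_gt hxy))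
  have hm : (a + b) / 2 ∈ Set.Ioo a b := ⟨by linarith, by linarith⟩
  push_neg at hnonconst
  obtain ⟨s₂, hs₂, hne⟩ := hnonconst (μ₂ ((a + b) / 2))
  obtain ⟨s₀, hs₀, hd0⟩ : ∃ s₀ ∈ Set.Ioo a b, μ₂' s₀ ≠ 0 := by
    rcases lt_trichotomy s₂ ((a + b) / 2) with h | h | h
    · exact key s₂ _ hs₂ hm h hne
    · exact absurd (by rw [h]) hne
    · exact key _ s₂ hm hs₂ h (Ne.symm hne)
  set t₀ : ℝ := μ₂ s₀ ^ 2 with ht₀def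
  have ht₀pos : 0 < t₀ := pow_pos (hpos s₀ hs₀) 2
  have hPt₀ : 0 < P t₀ := by
    rw [ht₀def, hPval s₀ hs₀]
    positivity
  have hP0 : P 0 < 0 := by
    simp only [hPdef]
    have : (0:ℝ) < C₂ ^ 2 := by positivity
    nlinarith
  -- Bound beyond which P is negative
  set M : ℝ := max t₀ (1 + |2 * C₁| + |C₃|) with hMdef
  have hMbig : ∀ t, M < t → P t < 0 := by
    intro t ht
    have h1 : 1 + |2 * C₁| + |C₃| < t := lt_of_le_of_lt (le_max_right _ _) ht
    have ha1 : 0 ≤ |2 * C₁| := abs_nonneg _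
    have ha2 : 0 ≤ |C₃| := abs_nonneg _
    have hb1 : 2 * C₁ ≤ |2 * C₁| := le_abs_self _
    have hb2 : C₃ ≤ |C₃| := le_abs_self _
    have ht1 : 1 < t := by linarith
    have hC : (0:ℝ) ≤ C₂ ^ 2 := sq_nonneg _
    simp only [hPdef]
    nlinarith [sq_nonneg t, mul_pos (zero_lt_one.trans ht1) (zero_lt_one.trans ht1)]
  -- Define ξ₁
  set S₁ : Set ℝ := {t | t ∈ Set.Icc (0:ℝ) t₀ ∧ 0 ≤ P t} with hS₁def
  have hS₁closed : IsClosed S₁ :=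
    IsClosed.inter isClosed_Icc (isClosed_le continuous_const hPcont)
  have hS₁ne : S₁.Nonempty := ⟨t₀, ⟨le_of_lt ht₀pos, le_refl _⟩, le_of_lt hPt₀⟩
  have hS₁bdd : BddBelow S₁ := ⟨0, fun x hx => hx.1.1⟩
  set ξ₁ : ℝ := sInf S₁ with hξ₁def
  have hξ₁mem : ξ₁ ∈ S₁ := hS₁closed.csInf_mem hS₁ne hS₁bdd
  have hξ₁le : ξ₁ ≤ t₀ := csInf_le hS₁bdd ⟨⟨le_of_lt ht₀pos, le_refl _⟩, le_of_lt hPt₀⟩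
  have hξ₁pos : 0 < ξ₁ := by
    rcases lt_or_eq_of_le hξ₁mem.1.1 with h | h
    · exact h
    · exfalso; rw [← h] at hξ₁mem; linarith [hξ₁mem.2]
  -- P < 0 strictly below ξ₁ (for nonnegative t)
  have hbelow : ∀ t, 0 ≤ t → t < ξ₁ → P t < 0 := by
    intro t ht0 htlt
    by_contra h
    push_neg at h
    have : t ∈ S₁ := ⟨⟨ht0, le_trans (le_of_lt htlt) hξ₁le⟩, h⟩
    exact absurd (csInf_le hS₁bdd this) (not_le.mpr htlt)
  have hPξ₁ : P ξ₁ = 0 := by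
    refine le_antisymm ?_ hξ₁mem.2
    have htend : Filter.Tendsto P (nhdsWithin ξ₁ (Set.Iio ξ₁)) (nhds (P ξ₁)) :=
      (hPcont.continuousWithinAt)
    refine le_of_tendsto htend ?_
    filter_upwards [Ioo_mem_nhdsLT_of_mem (Set.mem_Ioc.mpr ⟨hξ₁pos, le_refl _⟩)] with t ht
    exact le_of_lt (hbelow t (le_of_lt ht.1) ht.2)
  -- Define ξ₂
  set S₂ : Set ℝ := {t | t ∈ Set.Icc t₀ M ∧ 0 ≤ P t} with hS₂def
  have hS₂closed : IsClosed S₂ :=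
    IsClosed.inter isClosed_Icc (isClosed_le continuous_const hPcont)
  have hS₂ne : S₂.Nonempty := ⟨t₀, ⟨le_refl _, le_max_left _ _⟩, le_of_lt hPt₀⟩
  have hS₂bdd : BddAbove S₂ := ⟨M, fun x hx => hx.1.2⟩
  set ξ₂ : ℝ := sSup S₂ with hξ₂def
  have hξ₂mem : ξ₂ ∈ S₂ := hS₂closed.csSup_mem hS₂ne hS₂bdd
  have hξ₂ge : t₀ ≤ ξ₂ := le_csSup hS₂bdd ⟨⟨le_refl _, le_max_left _ _⟩, le_of_lt hPt₀⟩
  have habove : ∀ t, ξ₂ < t → P t < 0 := by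
    intro t htgt
    rcases le_or_gt t M with h | h
    · by_contra hc
      push_neg at hc
      have : t ∈ S₂ := ⟨⟨le_trans hξ₂ge (le_of_lt htgt), h⟩, hc⟩
      exact absurd (le_csSup hS₂bdd this) (not_le.mpr htgt)
    · exact hMbig t h
  have hPξ₂ : P ξ₂ = 0 := by
    refine le_antisymm ?_ hξ₂mem.2
    have htend : Filter.Tendsto P (nhdsWithin ξ₂ (Set.Ioi ξ₂)) (nhds (P ξ₂)) :=
      (hPcont.continuousWithinAt)
    refine le_of_tendsto htend ?_
    filter_upwards [self_mem_nhdsWithin] with t ht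
    exact le_of_lt (habove t ht)
  have hξ₁netc : ξ₁ ≠ t₀ := fun h => by rw [h] at hPξ₁; linarith
  have hξ₂netc : ξ₂ ≠ t₀ := fun h => by rw [h] at hPξ₂; linarith
  have hξ₁lt : ξ₁ < ξ₂ :=
    lt_of_lt_of_le (lt_of_le_of_ne hξ₁le hξ₁netc) (lt_of_le_of_ne hξ₂ge (Ne.symm hξ₂netc)).le
  refine ⟨ξ₁, ξ₂, hξ₁pos, hξ₁lt, hPξ₁, hPξ₂, ?_⟩
  intro s hs
  constructor
  · by_contra h
    push_neg at h
    exact absurd (hPnonneg s hs) (not_le.mpr (hbelow _ (sq_nonneg _) h))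
  · by_contra h
    push_neg at h
    exact absurd (hPnonneg s hs) (not_le.mpr (habove _ h))
end

section
/- Let μ₁, μ₂, μ₃ : I → ℝ be smooth, μ₂ > 0, μ₃ > 0, satisfying μ₁' + 3 μ₂ μ₂' = 0, μ₂'' = μ₂³ + 2 μ₁ μ₂ + μ₂ μ₃², and 2 μ₂' μ₃ + μ₂ μ₃' = 0 on a connected open interval I. If one of μ₁, μ₂, μ₃ is constant, then all three are constant. -/
lemma const_of_deriv_zero {a b : ℝ} {f : ℝ → ℝ}
    (h : ∀ x ∈ Set.Ioo a b, HasDerivAt f 0 x) :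
    ∃ c, ∀ x ∈ Set.Ioo a b, f x = c := by
  rcases Set.eq_empty_or_nonempty (Set.Ioo a b) with he | ⟨x₀, hx₀⟩
  · exact ⟨0, fun x hx => by simp [he] at hx⟩
  · refine ⟨f x₀, fun x hx => ?_⟩
    have := (convex_Ioo a b).is_const_of_fderivWithin_eq_zero (𝕜 := ℝ)
      (f := f) (fun y hy => ((h y hy).differentiableAt).differentiableWithinAt)
      (fun y hy => ?_) hx hx₀
    · exact this
    · rw [fderivWithin_eq_fderiv ((isOpen_Ioo.uniqueDiffOn) y hy)
        (h y hy).differentiableAt]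
      exact (h y hy).hasFDerivAt.fderiv.trans (by ext t; simp)

lemma deriv_zero_of_const {a b : ℝ} {f f' : ℝ → ℝ} {c : ℝ}
    (hd : ∀ x ∈ Set.Ioo a b, HasDerivAt f (f' x) x)
    (hc : ∀ x ∈ Set.Ioo a b, f x = c) :
    ∀ x ∈ Set.Ioo a b, f' x = 0 := by
  intro x hx
  have h0 : HasDerivAt f 0 x := by
    have : f =ᶠ[nhds x] fun _ => c :=
      Filter.eventuallyEq_iff_exists_mem.2 ⟨Set.Ioo a b, isOpen_Ioo.mem_nhds hx, hc⟩
    exact (hasDerivAt_const x c).congr_of_eventuallyEq this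
  exact (hd x hx).unique h0

/-- For the Euler–Lagrange system of conformal geodesics in `Q₄`, with `μ₂ > 0` and
`μ₃ > 0` on an open interval: if one of `μ₁, μ₂, μ₃` is constant, then all three are. -/
theorem stmt_6 (a b : ℝ) (μ₁ μ₂ μ₃ μ₁' μ₂' μ₂'' μ₃' : ℝ → ℝ)
    (hsmooth₁ : ContDiffOn ℝ (⊤ : ℕ∞) μ₁ (Set.Ioo a b))
    (hsmooth₂ : ContDiffOn ℝ (⊤ : ℕ∞) μ₂ (Set.Ioo a b))
    (hsmooth₃ : ContDiffOn ℝ (⊤ : ℕ∞) μ₃ (Set.Ioo a b))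
    (hpos₂ : ∀ x ∈ Set.Ioo a b, 0 < μ₂ x)
    (hpos₃ : ∀ x ∈ Set.Ioo a b, 0 < μ₃ x)
    (hd₁ : ∀ x ∈ Set.Ioo a b, HasDerivAt μ₁ (μ₁' x) x)
    (hd₂ : ∀ x ∈ Set.Ioo a b, HasDerivAt μ₂ (μ₂' x) x)
    (hd₂' : ∀ x ∈ Set.Ioo a b, HasDerivAt μ₂' (μ₂'' x) x)
    (hd₃ : ∀ x ∈ Set.Ioo a b, HasDerivAt μ₃ (μ₃' x) x)
    (hODE₁ : ∀ x ∈ Set.Ioo a b, μ₁' x + 3 * μ₂ x * μ₂' x = 0)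
    (hODE₂ : ∀ x ∈ Set.Ioo a b, μ₂'' x = μ₂ x ^ 3 + 2 * μ₁ x * μ₂ x + μ₂ x * μ₃ x ^ 2)
    (hODE₃ : ∀ x ∈ Set.Ioo a b, 2 * μ₂' x * μ₃ x + μ₂ x * μ₃' x = 0)
    (hconst : (∃ c, ∀ x ∈ Set.Ioo a b, μ₁ x = c) ∨ (∃ c, ∀ x ∈ Set.Ioo a b, μ₂ x = c)
      ∨ (∃ c, ∀ x ∈ Set.Ioo a b, μ₃ x = c)) :
    (∃ c, ∀ x ∈ Set.Ioo a b, μ₁ x = c) ∧ (∃ c, ∀ x ∈ Set.Ioo a b, μ₂ x = c)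
      ∧ (∃ c, ∀ x ∈ Set.Ioo a b, μ₃ x = c) := by
  -- In all three cases, μ₂' = 0 on the interval.
  have h₂'0 : ∀ x ∈ Set.Ioo a b, μ₂' x = 0 := by
    rcases hconst with ⟨c, hc⟩ | ⟨c, hc⟩ | ⟨c, hc⟩
    · intro x hx
      have h1 : μ₁' x = 0 := deriv_zero_of_const hd₁ hc x hx
      have := hODE₁ x hx
      have h2 := hpos₂ x hx
      nlinarith [mul_pos h2 h2]
    · exact deriv_zero_of_const hd₂ hc
    · intro x hx
      have h3 : μ₃' x = 0 := deriv_zero_of_const hd₃ hc x hx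
      have h := hODE₃ x hx
      rw [h3] at h
      have h2 := hpos₃ x hx
      have hz : μ₂' x * μ₃ x = 0 := by linarith
      rcases mul_eq_zero.mp hz with h0 | h0
      · exact h0
      · exact absurd h0 h2.ne'
  have h₁'0 : ∀ x ∈ Set.Ioo a b, μ₁' x = 0 := by
    intro x hx
    have h := hODE₁ x hx
    rw [h₂'0 x hx] at h
    linarith
  have h₃'0 : ∀ x ∈ Set.Ioo a b, μ₃' x = 0 := by
    intro x hx
    have h := hODE₃ x hx
    rw [h₂'0 x hx] at h
    have h2 := hpos₂ x hx
    nlinarith [mul_pos h2 h2]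
  refine ⟨const_of_deriv_zero fun x hx => ?_, const_of_deriv_zero fun x hx => ?_,
    const_of_deriv_zero fun x hx => ?_⟩
  · simpa [h₁'0 x hx] using hd₁ x hx
  · simpa [h₂'0 x hx] using hd₂ x hx
  · simpa [h₃'0 x hx] using hd₃ x hx
end

section
/- Let A : I → M_k(ℝ) be a continuous matrix-valued function on an interval I and E : I → M_{m×k}(ℝ) a C¹ solution of E'(s) = E(s) A(s). Then the rank of E(s) is constant on I. -/
/-!
The left kernel `{v | v ᵥ* E s = 0}` does not depend on `s`: for fixed `v`, the curve
`s ↦ v ᵥ* E s` solves the linear equation `y' = y ᵥ* A s`, whose right-hand side is Lipschitz in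
`y` uniformly on compact subintervals, so by uniqueness it vanishes on all of `I` as soon as it
vanishes at one point. By rank–nullity, `E s` then has the same rank for every `s`.
-/

open Set Matrix

section LinftyOpNorm

attribute [local instance] Matrix.linftyOpNormedAddCommGroup Matrix.linftyOpNormedSpace

variable {n : Type*} [Fintype n]

theorem lipschitzWith_vecMul (M : Matrix n n ℝ) :
    LipschitzWith ‖Mᵀ‖₊ (fun x : n → ℝ => x ᵥ* M) :=
  LipschitzWith.of_dist_le_mul fun x y => by
    simpa only [dist_eq_norm, ← mulVec_transpose, ← mulVec_sub, coe_nnnorm] using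
      linfty_opNorm_mulVec Mᵀ (x - y)

theorem exists_lipschitzWith_vecMul_of_continuousOn {A : ℝ → Matrix n n ℝ} {a b : ℝ}
    (hA : ContinuousOn A (Icc a b)) :
    ∃ K, ∀ t ∈ Icc a b, LipschitzWith K (fun x : n → ℝ => x ᵥ* A t) := by
  obtain ⟨C, hC⟩ := isCompact_Icc.exists_bound_of_continuousOn
    (continuous_id.matrix_transpose.comp_continuousOn hA)
  refine ⟨C.toNNReal, fun t ht => (lipschitzWith_vecMul (A t)).weaken ?_⟩
  rw [← NNReal.coe_le_coe, coe_nnnorm]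
  exact (hC t ht).trans (Real.le_coe_toNNReal C)

end LinftyOpNorm

section LinearODE

variable {n : Type*} [Fintype n] {A : ℝ → Matrix n n ℝ} {y : ℝ → n → ℝ}

theorem eqOn_zero_of_hasDerivAt_vecMul {a b : ℝ} (hA : ContinuousOn A (Icc a b))
    (hy : ∀ t ∈ Icc a b, HasDerivAt y (y t ᵥ* A t) t) (h : y a = 0 ∨ y b = 0) :
    EqOn y 0 (Icc a b) := by
  obtain ⟨K, hK⟩ := exists_lipschitzWith_vecMul_of_continuousOn hA
  have hyc : ContinuousOn y (Icc a b) := fun t ht => (hy t ht).continuousAt.continuousWithinAt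
  have h0 : ∀ t, HasDerivAt (0 : ℝ → n → ℝ) (0 ᵥ* A t) t := fun t => by simp
  rcases h with ha | hb
  · exact ODE_solution_unique_of_mem_Icc_right
      (fun t ht => (hK t (Ico_subset_Icc_self ht)).lipschitzOnWith)
      hyc (fun t ht => (hy t (Ico_subset_Icc_self ht)).hasDerivWithinAt) (fun _ _ => mem_univ _)
      continuousOn_const (fun t _ => (h0 t).hasDerivWithinAt) (fun _ _ => mem_univ _) ha
  · exact ODE_solution_unique_of_mem_Icc_left
      (fun t ht => (hK t (Ioc_subset_Icc_self ht)).lipschitzOnWith)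
      hyc (fun t ht => (hy t (Ioc_subset_Icc_self ht)).hasDerivWithinAt) (fun _ _ => mem_univ _)
      continuousOn_const (fun t _ => (h0 t).hasDerivWithinAt) (fun _ _ => mem_univ _) hb

theorem eq_zero_of_hasDerivAt_vecMul {I : Set ℝ} (hI : I.OrdConnected) (hA : ContinuousOn A I)
    (hy : ∀ t ∈ I, HasDerivAt y (y t ᵥ* A t) t) {s t : ℝ} (hs : s ∈ I) (ht : t ∈ I)
    (h : y s = 0) : y t = 0 := by
  have hsub : uIcc s t ⊆ I := hI.uIcc_subset hs ht
  refine eqOn_zero_of_hasDerivAt_vecMul (hA.mono hsub) (fun τ hτ => hy τ (hsub hτ)) ?_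
    right_mem_uIcc
  rcases le_total s t with hst | hts
  · exact .inl (by rwa [min_eq_left hst])
  · exact .inr (by rwa [max_eq_left hts])

end LinearODE

theorem hasDerivAt_vecMul_of_hasDerivAt_entries {m n : Type*} [Fintype m]
    {E : ℝ → Matrix m n ℝ} {E' : Matrix m n ℝ} {s : ℝ}
    (hE : ∀ i j, HasDerivAt (fun t => E t i j) (E' i j) s) (v : m → ℝ) :
    HasDerivAt (fun t => v ᵥ* E t) (v ᵥ* E') s :=
  hasDerivAt_pi.2 fun j => by
    simpa only [vecMul, dotProduct] using
      HasDerivAt.fun_sum (u := Finset.univ) fun i _ => (hE i j).const_mul (v i)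

theorem Matrix.rank_eq_of_ker_mulVecLin_eq {m n K : Type*} [Fintype n] [Field K]
    {M N : Matrix m n K} (h : LinearMap.ker M.mulVecLin = LinearMap.ker N.mulVecLin) :
    M.rank = N.rank := by
  have hM := LinearMap.finrank_range_add_finrank_ker M.mulVecLin
  have hN := LinearMap.finrank_range_add_finrank_ker N.mulVecLin
  rw [h] at hM
  exact Nat.add_right_cancel (hM.trans hN.symm)

/-- If `E : I → M_{m×k}(ℝ)` is a `C¹` solution of `E' = E A` with `A` continuous on a
connected interval `I`, then the rank of `E(s)` is constant on `I`. -/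
theorem stmt_7 (m k : ℕ) (I : Set ℝ) (hI : I.OrdConnected)
    (A : ℝ → Matrix (Fin k) (Fin k) ℝ) (E : ℝ → Matrix (Fin m) (Fin k) ℝ)
    (hA : ∀ i j, ContinuousOn (fun s => A s i j) I)
    (hE : ∀ s ∈ I, ∀ i j, HasDerivAt (fun t => E t i j) ((E s * A s) i j) s) :
    ∀ s ∈ I, ∀ t ∈ I, (E s).rank = (E t).rank := by
  have hA' : ContinuousOn A I := continuousOn_pi.2 fun i => continuousOn_pi.2 (hA i)
  have hker : ∀ s ∈ I, ∀ t ∈ I,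
      LinearMap.ker (E s)ᵀ.mulVecLin ≤ LinearMap.ker (E t)ᵀ.mulVecLin := fun s hs t ht v hv => by
    simp only [LinearMap.mem_ker, mulVecLin_apply, mulVec_transpose] at hv ⊢
    refine eq_zero_of_hasDerivAt_vecMul (y := fun τ => v ᵥ* E τ) hI hA' (fun τ hτ => ?_) hs ht hv
    simpa only [vecMul_vecMul] using hasDerivAt_vecMul_of_hasDerivAt_entries (hE τ hτ) v
  intro s hs t ht
  rw [← rank_transpose (E s), ← rank_transpose (E t)]
  exact rank_eq_of_ker_mulVecLin_eq ((hker s hs t ht).antisymm (hker t ht s hs))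
end

section
/- Let E : I → M_{m×k}(ℝ) be a C¹ solution of E'(s) = E(s) A(s), where A : I → M_k(ℝ) is continuous and I is a connected interval. Then the column span of E(s) (as a subspace of ℝ^m) is independent of s. -/
/-!
If `φ` is a linear functional vanishing on the columns of `E(s)`, then the row vector
`u(r) = (φ(E(r)e_j))_j` solves the linear ODE `u' = Aᵀ u` with `u(s) = 0`; by Grönwall's
inequality `u ≡ 0` on `I`. Hence every functional annihilating the column span at time `s`
annihilates it at any time `t`, which gives one inclusion, and the other follows by symmetry.
-/

open Set Matrix

section LinearODE

variable {E : Type*} [NormedAddCommGroup E] [NormedSpace ℝ E]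

theorem eq_zero_of_norm_deriv_le_mul_norm_of_eq_zero {f f' : ℝ → E} {K a b c : ℝ}
    (hf : ∀ x ∈ Icc a b, HasDerivAt f (f' x) x) (bound : ∀ x ∈ Icc a b, ‖f' x‖ ≤ K * ‖f x‖)
    (hc : c ∈ Icc a b) (hfc : f c = 0) : ∀ x ∈ Icc a b, f x = 0 := by
  intro x hx
  rcases le_total c x with hcx | hxc
  · have hsub : Icc c b ⊆ Icc a b := Icc_subset_Icc_left hc.1
    exact eq_zero_of_abs_deriv_le_mul_abs_self_of_eq_zero_right
      (fun y hy => (hf y (hsub hy)).continuousAt.continuousWithinAt)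
      (fun y hy => (hf y (hsub (Ico_subset_Icc_self hy))).hasDerivWithinAt) hfc
      (fun y hy => bound y (hsub (Ico_subset_Icc_self hy))) x ⟨hcx, hx.2⟩
  · -- run time backwards: `y ↦ f (-y)` solves the same kind of inequality
    have hsub : ∀ y ∈ Icc (-c) (-a), -y ∈ Icc a b := fun y hy =>
      ⟨le_neg_of_le_neg hy.2, (neg_le.2 hy.1).trans hc.2⟩
    have hderiv : ∀ y ∈ Icc (-c) (-a), HasDerivAt (fun z => f (-z)) (-f' (-y)) y := fun y hy => by
      simpa [Function.comp_def] using (hf (-y) (hsub y hy)).scomp y (hasDerivAt_neg y)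
    have := eq_zero_of_abs_deriv_le_mul_abs_self_of_eq_zero_right (K := K)
      (fun y hy => (hderiv y hy).continuousAt.continuousWithinAt)
      (fun y hy => (hderiv y (Ico_subset_Icc_self hy)).hasDerivWithinAt) (by simpa using hfc)
      (fun y hy => by simpa using bound (-y) (hsub y (Ico_subset_Icc_self hy))) (-x)
      ⟨neg_le_neg hxc, neg_le_neg hx.1⟩
    simpa using this

theorem eq_zero_of_hasDerivAt_clm_apply {I : Set ℝ} (hI : I.OrdConnected) {B : ℝ → E →L[ℝ] E}
    (hB : ContinuousOn B I) {u : ℝ → E} (hu : ∀ r ∈ I, HasDerivAt u (B r (u r)) r) {s t : ℝ}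
    (hs : s ∈ I) (ht : t ∈ I) (hus : u s = 0) : u t = 0 := by
  have hsub : uIcc s t ⊆ I := hI.uIcc_subset hs ht
  obtain ⟨C, hC⟩ := isCompact_uIcc.exists_bound_of_continuousOn (hB.mono hsub)
  exact eq_zero_of_norm_deriv_le_mul_norm_of_eq_zero (fun r hr => hu r (hsub hr))
    (fun r hr => (B r).le_of_opNorm_le (hC r hr) (u r)) left_mem_uIcc hus t right_mem_uIcc

end LinearODE

section MatrixODE

variable {m n : Type*} [Fintype m] [Fintype n]

theorem continuous_toContinuousLinearMap_toLin'_transpose [DecidableEq n] :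
    Continuous fun M : Matrix n n ℝ => LinearMap.toContinuousLinearMap (toLin' Mᵀ) :=
  (LinearMap.toContinuousLinearMap.toLinearMap ∘ₗ (toLin' : _ ≃ₗ[ℝ] _).toLinearMap ∘ₗ
    (transposeLinearEquiv n n ℝ ℝ).toLinearMap).continuous_of_finiteDimensional

theorem hasDerivAt_comp_col {A : ℝ → Matrix n n ℝ} {E : ℝ → Matrix m n ℝ} {r : ℝ}
    (hE : ∀ i j, HasDerivAt (fun t => E t i j) ((E r * A r) i j) r)
    (φ : Module.Dual ℝ (m → ℝ)) :
    HasDerivAt (fun t => φ ∘ (E t).col) ((A r)ᵀ *ᵥ (φ ∘ (E r).col)) r := by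
  refine hasDerivAt_pi.2 fun j => ?_
  have hcol : HasDerivAt (fun t => (E t).col j) ((E r * A r).col j) r :=
    hasDerivAt_pi.2 fun i => hE i j
  have hmul : (E r * A r).col j = ∑ l, A r l j • (E r).col l := by
    ext i
    simp [mul_apply, mul_comm]
  have hφ : ((A r)ᵀ *ᵥ (φ ∘ (E r).col)) j = φ ((E r * A r).col j) := by
    simp only [hmul, map_sum, map_smul, mulVec, dotProduct, transpose_apply, Function.comp_apply,
      smul_eq_mul]
  rw [hφ]
  exact (LinearMap.toContinuousLinearMap φ).hasFDerivAt.comp_hasDerivAt r hcol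

theorem span_range_col_le [DecidableEq n] {I : Set ℝ} (hI : I.OrdConnected)
    {A : ℝ → Matrix n n ℝ} {E : ℝ → Matrix m n ℝ} (hA : ContinuousOn A I)
    (hE : ∀ s ∈ I, ∀ i j, HasDerivAt (fun t => E t i j) ((E s * A s) i j) s)
    {s t : ℝ} (hs : s ∈ I) (ht : t ∈ I) :
    Submodule.span ℝ (range (E t).col) ≤ Submodule.span ℝ (range (E s).col) := by
  rw [Submodule.span_le]
  rintro _ ⟨j, rfl⟩
  rw [SetLike.mem_coe, ← Subspace.forall_mem_dualAnnihilator_apply_eq_zero_iff]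
  intro φ hφ
  have hφs : φ ∘ (E s).col = 0 := funext fun j' =>
    (Submodule.mem_dualAnnihilator φ).1 hφ _ (Submodule.subset_span ⟨j', rfl⟩)
  have := eq_zero_of_hasDerivAt_clm_apply hI
    (continuous_toContinuousLinearMap_toLin'_transpose.comp_continuousOn hA)
    (fun r hr => hasDerivAt_comp_col (hE r hr) φ) hs ht hφs
  exact congrFun this j

end MatrixODE

/-- If `E : I → M_{m×k}(ℝ)` is a `C¹` solution of `E' = E A` with `A` continuous on a
connected interval `I`, then the column span of `E(s)` (a subspace of `ℝ^m`) is
independent of `s`. -/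
theorem stmt_8 (m k : ℕ) (I : Set ℝ) (hI : I.OrdConnected)
    (A : ℝ → Matrix (Fin k) (Fin k) ℝ) (E : ℝ → Matrix (Fin m) (Fin k) ℝ)
    (hA : ∀ i j, ContinuousOn (fun s => A s i j) I)
    (hE : ∀ s ∈ I, ∀ i j, HasDerivAt (fun t => E t i j) ((E s * A s) i j) s) :
    ∀ s ∈ I, ∀ t ∈ I,
      Submodule.span ℝ (Set.range fun j : Fin k => fun i : Fin m => E s i j)
        = Submodule.span ℝ (Set.range fun j : Fin k => fun i : Fin m => E t i j) := by
  have hA' : ContinuousOn A I := continuousOn_pi.2 fun i => continuousOn_pi.2 (hA i)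
  intro s hs t ht
  exact le_antisymm (span_range_col_le hI hA' hE ht hs) (span_range_col_le hI hA' hE hs ht)
end

section
/- The map J : (x, A) ↦ [[1, 0, 0],[x, A, 0],[(1/2)|x|², ᵗx A, 1]] from ℝⁿ × SO(n) to GL(n+2, ℝ) is an injective group homomorphism from the Euclidean group E(n) (with multiplication (x,A)(y,B) = (x + A y, A B)) into the group of matrices G satisfying ᵗG S G = S, where S = [[0,0,−1],[0,I_n,0],[−1,0,0]]. -/
open Matrix

/-- The Lorentz matrix `S = [[0,0,−1],[0,I_n,0],[−1,0,0]]` in `(1,n,1)` block form. -/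
def lorentzS (n : ℕ) : Matrix (Unit ⊕ Fin n ⊕ Unit) (Unit ⊕ Fin n ⊕ Unit) ℝ :=
  fun i j =>
    match i, j with
    | .inl _, .inr (.inr _) => -1
    | .inr (.inr _), .inl _ => -1
    | .inr (.inl a), .inr (.inl b) => if a = b then 1 else 0
    | _, _ => 0

/-- The matrix `J(x, A) = [[1,0,0],[x,A,0],[(1/2)|x|², ᵗxA, 1]]` in `(1,n,1)` block form. -/
noncomputable def euclJ (n : ℕ) (x : Fin n → ℝ) (A : Matrix (Fin n) (Fin n) ℝ) :
    Matrix (Unit ⊕ Fin n ⊕ Unit) (Unit ⊕ Fin n ⊕ Unit) ℝ :=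
  fun i j =>
    match i, j with
    | .inl _, .inl _ => 1
    | .inr (.inl a), .inl _ => x a
    | .inr (.inl a), .inr (.inl c) => A a c
    | .inr (.inr _), .inl _ => (1 / 2) * ∑ a, x a ^ 2
    | .inr (.inr _), .inr (.inl c) => ∑ a, x a * A a c
    | .inr (.inr _), .inr (.inr _) => 1
    | _, _ => 0

lemma orth_key {n : ℕ} {A : Matrix (Fin n) (Fin n) ℝ} (hA : Aᵀ * A = 1) (b c : Fin n) :
    ∑ a, A a b * A a c = if b = c then 1 else 0 := by
  have := congrFun (congrFun hA b) c
  simpa [Matrix.mul_apply, Matrix.one_apply, Matrix.transpose_apply] using this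

lemma orth_sum {n : ℕ} {A : Matrix (Fin n) (Fin n) ℝ} (hA : Aᵀ * A = 1) (u v : Fin n → ℝ) :
    ∑ a, (∑ b, A a b * u b) * (∑ c, A a c * v c) = ∑ b, u b * v b := by
  have h1 : ∀ a, (∑ b, A a b * u b) * (∑ c, A a c * v c)
      = ∑ b, ∑ c, u b * v c * (A a b * A a c) := by
    intro a
    rw [Finset.sum_mul_sum]
    exact Finset.sum_congr rfl fun b _ => Finset.sum_congr rfl fun c _ => by ring
  simp only [h1]
  rw [Finset.sum_comm]
  refine Finset.sum_congr rfl fun b _ => ?_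
  rw [Finset.sum_comm]
  have : ∀ c : Fin n, ∑ a, u b * v c * (A a b * A a c) = u b * v c * (if b = c then 1 else 0) := by
    intro c
    rw [← Finset.mul_sum, orth_key hA]
  simp only [this]
  simp [mul_ite]

/-- `J : (x, A) ↦ [[1,0,0],[x,A,0],[(1/2)|x|², ᵗxA, 1]]` is an injective group homomorphism
from `E(n) = ℝⁿ ⋊ SO(n)`, with product `(x,A)(y,B) = (x + Ay, AB)`, into the group of
matrices preserving the Lorentz form: `J(0,1) = 1`, `J((x,A)(y,B)) = J(x,A) J(y,B)`,
`J` is injective, and `ᵗJ(x,A) · S · J(x,A) = S`. -/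
theorem stmt_14 (n : ℕ) :
    euclJ n 0 1 = 1 ∧
      (∀ (x y : Fin n → ℝ) (A B : Matrix (Fin n) (Fin n) ℝ),
        Aᵀ * A = 1 → A.det = 1 → Bᵀ * B = 1 → B.det = 1 →
        euclJ n (x + A.mulVec y) (A * B) = euclJ n x A * euclJ n y B) ∧
      (∀ (x y : Fin n → ℝ) (A B : Matrix (Fin n) (Fin n) ℝ),
        Aᵀ * A = 1 → A.det = 1 → Bᵀ * B = 1 → B.det = 1 →
        euclJ n x A = euclJ n y B → x = y ∧ A = B) ∧
      (∀ (x : Fin n → ℝ) (A : Matrix (Fin n) (Fin n) ℝ), Aᵀ * A = 1 → A.det = 1 →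
        (euclJ n x A)ᵀ * lorentzS n * euclJ n x A = lorentzS n) := by
  refine ⟨?_, ?_, ?_, ?_⟩
  · ext i j
    rcases i with i | a | i <;> rcases j with j | b | j <;>
      simp [euclJ, Matrix.one_apply, eq_comm]
  · intro x y A B hA _ hB _
    ext i j
    rcases i with i | a | i <;> rcases j with j | b | j <;>
      simp [euclJ, Matrix.mul_apply, Matrix.mulVec, dotProduct,
        Fintype.sum_sum_type]
    · -- (inr inr, inl) : (1/2)∑(x+Ay)² = (1/2)∑x² + ∑_c (ᵗxA)_c y_c + (1/2)∑y²
      have expand : ∀ a : Fin n, (x a + ∑ c, A a c * y c) ^ 2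
          = x a ^ 2 + 2 * (x a * ∑ c, A a c * y c)
            + (∑ c, A a c * y c) * (∑ c, A a c * y c) := by intro a; ring
      simp only [expand, Finset.sum_add_distrib]
      rw [orth_sum hA]
      have swap : ∑ a, x a * ∑ c, A a c * y c = ∑ c, (∑ a, x a * A a c) * y c := by
        simp only [Finset.mul_sum, Finset.sum_mul]
        rw [Finset.sum_comm]
        exact Finset.sum_congr rfl fun c _ => Finset.sum_congr rfl fun a _ => by ring
      rw [show (∑ a, 2 * (x a * ∑ c, A a c * y c)) = 2 * ∑ a, x a * ∑ c, A a c * y c from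
        (Finset.mul_sum _ _ _).symm, swap]
      have sq : ∀ a : Fin n, y a * y a = y a ^ 2 := fun a => (sq (y a)).symm
      simp only [sq]
      ring
    · -- (inr inr, inr inl b)
      have expand : ∀ a : Fin n, (x a + ∑ c, A a c * y c) * (∑ d, A a d * B d b)
          = x a * (∑ d, A a d * B d b) + (∑ c, A a c * y c) * (∑ d, A a d * B d b) := by
        intro a; ring
      simp only [expand, Finset.sum_add_distrib]
      rw [orth_sum hA]
      have swap : ∑ a, x a * ∑ d, A a d * B d b = ∑ d, (∑ a, x a * A a d) * B d b := by
        simp only [Finset.mul_sum, Finset.sum_mul]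
        rw [Finset.sum_comm]
        exact Finset.sum_congr rfl fun c _ => Finset.sum_congr rfl fun a _ => by ring
      rw [swap]
  · intro x y A B _ _ _ _ h
    constructor
    · funext a
      exact congrFun (congrFun h (.inr (.inl a))) (.inl ())
    · ext a c
      exact congrFun (congrFun h (.inr (.inl a))) (.inr (.inl c))
  · intro x A hA _
    ext i j
    rcases i with i | a | i <;> rcases j with j | b | j <;>
      simp [euclJ, lorentzS, Matrix.mul_apply, Matrix.transpose_apply,
        Fintype.sum_sum_type]
    · have sq : ∀ a : Fin n, x a * x a = x a ^ 2 := fun a => (sq (x a)).symm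
      simp only [sq]; ring
    · have h2 : ∑ c, A c a * x c = ∑ c, x c * A c a :=
        Finset.sum_congr rfl fun c _ => mul_comm _ _
      rw [h2]; ring
    · rw [orth_key hA]
end

section
/- Fix C₁, C₂ ∈ ℝ with C₂ ≠ 0 and smooth μ₂ > 0 with derivative μ₂' on an interval. Define μ₁ = −(3/2)μ₂² + C₁ and μ₃ = C₂/μ₂². Then the 6×6 matrix Θ with rows [0, 1, −μ₁−μ₂², μ₂', μ₂μ₃, 0], [0, 0, 0, −μ₂, 0, 1], [1, 0, 0, 0, 0, −μ₁−μ₂²], [0, μ₂, 0, 0, 0, μ₂'], [0, 0, 0, 0, 0, μ₂μ₃], [0, 0, 1, 0, 0, 0] has characteristic polynomial χ_Θ(t) = t⁶ + 2C₁ t⁴ − (1 + C₃) t² − C₂², where C₃ = (μ₂')² + μ₂⁴ − 2C₁μ₂² + C₂²/μ₂² (assumed constant). -/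
/-!
`Θ` depends on the data only through `a = −μ₁ − μ₂²`, `b = μ₂'`, `c = μ₂` and `d = μ₂μ₃`.
Over any commutative ring, cofactor expansion gives the characteristic polynomial
`t⁶ + (c² − 2a)t⁴ − (1 + b² + d² + 2ac²)t² − c²d²`, and the definitions of `μ₁`, `μ₃` and `C₃`
turn these three coefficients into `2C₁`, `1 + C₃` and `C₂²`.
-/

open Polynomial

section

variable {R : Type*} [CommRing R]

def thetaMatrix (a b c d : R) : Matrix (Fin 6) (Fin 6) R :=
  !![0, 1, a, b, d, 0;
     0, 0, 0, -c, 0, 1;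
     1, 0, 0, 0, 0, a;
     0, c, 0, 0, 0, b;
     0, 0, 0, 0, 0, d;
     0, 0, 1, 0, 0, 0]

theorem charmatrix_thetaMatrix (a b c d : R) :
    (thetaMatrix a b c d).charmatrix =
      !![X, -1, -C a, -C b, -C d, 0;
         0, X, 0, C c, 0, -1;
         -1, 0, X, 0, 0, -C a;
         0, -C c, 0, X, 0, -C b;
         0, 0, 0, 0, X, -C d;
         0, 0, -1, 0, 0, X] := by
  ext i j
  fin_cases i <;> fin_cases j <;> simp [thetaMatrix]

theorem charpoly_thetaMatrix (a b c d : R) :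
    (thetaMatrix a b c d).charpoly =
      X ^ 6 + C (c ^ 2 - 2 * a) * X ^ 4 - C (1 + b ^ 2 + d ^ 2 + 2 * a * c ^ 2) * X ^ 2
        - C (c ^ 2 * d ^ 2) := by
  rw [Matrix.charpoly, charmatrix_thetaMatrix]
  simp [Matrix.det_succ_row_zero, Fin.sum_univ_succ, Fin.succAbove, map_ofNat]
  ring

end

theorem stmt_16_general (C₁ C₂ : ℝ) (m m' : ℝ) (hm : 0 < m)
    (μ₁ μ₃ C₃ : ℝ)
    (hμ₁ : μ₁ = -(3 / 2) * m ^ 2 + C₁)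
    (hμ₃ : μ₃ = C₂ / m ^ 2)
    (hC₃ : C₃ = m' ^ 2 + m ^ 4 - 2 * C₁ * m ^ 2 + C₂ ^ 2 / m ^ 2)
    (Θ : Matrix (Fin 6) (Fin 6) ℝ)
    (hΘ : Θ = !![0, 1, -μ₁ - m ^ 2, m', m * μ₃, 0;
                 0, 0, 0, -m, 0, 1;
                 1, 0, 0, 0, 0, -μ₁ - m ^ 2;
                 0, m, 0, 0, 0, m';
                 0, 0, 0, 0, 0, m * μ₃;
                 0, 0, 1, 0, 0, 0]) :
    Θ.charpoly = X ^ 6 + C (2 * C₁) * X ^ 4 - C (1 + C₃) * X ^ 2 - C (C₂ ^ 2) := by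
  have hm₀ : m ≠ 0 := hm.ne'
  have hcoeff₄ : m ^ 2 - 2 * (-μ₁ - m ^ 2) = 2 * C₁ := by rw [hμ₁]; ring
  have hcoeff₂ : 1 + m' ^ 2 + (m * μ₃) ^ 2 + 2 * (-μ₁ - m ^ 2) * m ^ 2 = 1 + C₃ := by
    rw [hC₃, hμ₁, hμ₃]; field_simp; ring
  have hcoeff₀ : m ^ 2 * (m * μ₃) ^ 2 = C₂ ^ 2 := by rw [hμ₃]; field_simp
  rw [show Θ = thetaMatrix (-μ₁ - m ^ 2) m' m (m * μ₃) from hΘ, charpoly_thetaMatrix, hcoeff₄, hcoeff₂,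
    hcoeff₀]

/-- At a fixed parameter value, with `μ₂ = m > 0`, `μ₂' = m'`, `μ₁ = −(3/2)m² + C₁`,
`μ₃ = C₂/m²` and energy constant `C₃ = m'² + m⁴ − 2C₁m² + C₂²/m²`, the `6×6` matrix `Θ`
has characteristic polynomial `t⁶ + 2C₁t⁴ − (1 + C₃)t² − C₂²`. -/
theorem stmt_16 (C₁ C₂ : ℝ) (hC₂ : C₂ ≠ 0) (m m' : ℝ) (hm : 0 < m)
    (μ₁ μ₃ C₃ : ℝ)
    (hμ₁ : μ₁ = -(3 / 2) * m ^ 2 + C₁)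
    (hμ₃ : μ₃ = C₂ / m ^ 2)
    (hC₃ : C₃ = m' ^ 2 + m ^ 4 - 2 * C₁ * m ^ 2 + C₂ ^ 2 / m ^ 2)
    (Θ : Matrix (Fin 6) (Fin 6) ℝ)
    (hΘ : Θ = !![0, 1, -μ₁ - m ^ 2, m', m * μ₃, 0;
                 0, 0, 0, -m, 0, 1;
                 1, 0, 0, 0, 0, -μ₁ - m ^ 2;
                 0, m, 0, 0, 0, m';
                 0, 0, 0, 0, 0, m * μ₃;
                 0, 0, 1, 0, 0, 0]) :
    Θ.charpoly = X ^ 6 + C (2 * C₁) * X ^ 4 - C (1 + C₃) * X ^ 2 - C (C₂ ^ 2) :=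
  stmt_16_general C₁ C₂ m m' hm μ₁ μ₃ C₃ hμ₁ hμ₃ hC₃ Θ hΘ
end

section
/- Let C₁, C₂, C₃ ∈ ℝ with C₂ ≠ 0, and suppose P(t) = −t³ + 2C₁t² + C₃t − C₂² has three distinct real roots ξ₋ < 0 < ξ₁ < ξ₂. Then the cubic R(x) = P(−x) − x = x³ + 2C₁x² − (1+C₃)x − C₂² has exactly one positive real root t₊, and its other two roots t₁, t₂ satisfy t₂ < −ξ₂ < −ξ₁ < t₁ < 0 < −ξ₋ < t₊. -/
/-- If `P(t) = −t³ + 2C₁t² + C₃t − C₂²` (`C₂ ≠ 0`) has three distinct real roots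
`ξ₋ < 0 < ξ₁ < ξ₂`, then the cubic `R(x) = P(−x) − x = x³ + 2C₁x² − (1+C₃)x − C₂²` has
three real roots `t₂ < t₁ < 0 < t₊` (in particular exactly one positive root `t₊`),
interlacing with the negatives of the roots of `P`:
`t₂ < −ξ₂ < −ξ₁ < t₁ < 0 < −ξ₋ < t₊`. -/
theorem stmt_17 (C₁ C₂ C₃ : ℝ) (hC₂ : C₂ ≠ 0) (ξm ξ₁ ξ₂ : ℝ)
    (hξm : ξm < 0) (hξ₁ : 0 < ξ₁) (hξ₁₂ : ξ₁ < ξ₂)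
    (hroots : ∀ t : ℝ, -t ^ 3 + 2 * C₁ * t ^ 2 + C₃ * t - C₂ ^ 2
      = -((t - ξm) * (t - ξ₁) * (t - ξ₂))) :
    ∃ t₂ t₁ tp : ℝ,
      (∀ x : ℝ, x ^ 3 + 2 * C₁ * x ^ 2 - (1 + C₃) * x - C₂ ^ 2
        = (x - t₂) * (x - t₁) * (x - tp)) ∧
      t₂ < -ξ₂ ∧ -ξ₂ < -ξ₁ ∧ -ξ₁ < t₁ ∧ t₁ < 0 ∧ 0 < -ξm ∧ -ξm < tp := by
  have hξ₂ : 0 < ξ₂ := hξ₁.trans hξ₁₂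
  have key : ∀ x : ℝ, x ^ 3 + 2 * C₁ * x ^ 2 - (1 + C₃) * x - C₂ ^ 2
      = (x + ξm) * (x + ξ₁) * (x + ξ₂) - x := by
    intro x
    linear_combination hroots (-x)
  set g : ℝ → ℝ := fun x => (x + ξm) * (x + ξ₁) * (x + ξ₂) - x with hgdef
  have hcont : Continuous g := by
    apply Continuous.sub
    · exact (((continuous_id.add continuous_const).mul
        (continuous_id.add continuous_const)).mul (continuous_id.add continuous_const))
    · exact continuous_id
  set X : ℝ := 3 + 3 * |ξm| + 3 * |ξ₁| + 3 * |ξ₂| with hXdef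
  have ham1 : -|ξm| ≤ ξm := neg_abs_le _
  have ham2 : ξm ≤ |ξm| := le_abs_self _
  have hb1 : -|ξ₁| ≤ ξ₁ := neg_abs_le _
  have hb2 : ξ₁ ≤ |ξ₁| := le_abs_self _
  have hc1 : -|ξ₂| ≤ ξ₂ := neg_abs_le _
  have hc2 : ξ₂ ≤ |ξ₂| := le_abs_self _
  have hana : 0 ≤ |ξm| := abs_nonneg _
  have hbnb : 0 ≤ |ξ₁| := abs_nonneg _
  have hcnc : 0 ≤ |ξ₂| := abs_nonneg _
  -- sign values
  have v2 : g (-ξ₂) = ξ₂ := by simp only [hgdef]; ring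
  have v1 : g (-ξ₁) = ξ₁ := by simp only [hgdef]; ring
  have v0 : g 0 = ξm * ξ₁ * ξ₂ := by simp only [hgdef]; ring
  have vm : g (-ξm) = ξm := by simp only [hgdef]; ring
  have hg0 : g 0 < 0 := by
    rw [v0]; have := mul_pos hξ₁ hξ₂; nlinarith
  -- value at X
  have f1 : (3:ℝ) ≤ X + ξm := by linarith
  have f2 : (3:ℝ) ≤ X + ξ₁ := by linarith
  have f3 : (3:ℝ) ≤ X + ξ₂ := by linarith
  have hgX : 0 < g X := by
    have p1 : (9:ℝ) ≤ (X + ξm) * (X + ξ₁) := by nlinarith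
    have p2 : 9 * (X + ξ₂) ≤ (X + ξm) * (X + ξ₁) * (X + ξ₂) :=
      mul_le_mul_of_nonneg_right p1 (by linarith)
    have : X < 9 * (X + ξ₂) := by linarith
    simp only [hgdef]; linarith
  -- value at -X
  have u1 : ξm - X ≤ -3 := by linarith
  have u2 : ξ₁ - X ≤ -3 := by linarith
  have u3 : ξ₂ - X ≤ -3 := by linarith
  have hgmX : g (-X) < 0 := by
    have p1 : (9:ℝ) ≤ (-X + ξm) * (-X + ξ₁) := by nlinarith
    have p2 : (-X + ξm) * (-X + ξ₁) * (-X + ξ₂) ≤ 9 * (-X + ξ₂) := by nlinarith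
    have : 9 * (-X + ξ₂) + X < 0 := by linarith
    simp only [hgdef]; linarith
  -- three roots by IVT
  obtain ⟨t₂, ht₂mem, ht₂0⟩ : ∃ t ∈ Set.Ioo (-X) (-ξ₂), g t = 0 := by
    have hle : -X ≤ -ξ₂ := by linarith
    have := intermediate_value_Ioo hle hcont.continuousOn
      (a := -X) (b := -ξ₂) (show (0:ℝ) ∈ Set.Ioo (g (-X)) (g (-ξ₂)) from
        ⟨hgmX, by rw [v2]; exact hξ₂⟩)
    obtain ⟨t, htmem, ht0⟩ := this
    exact ⟨t, htmem, ht0⟩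
  obtain ⟨t₁, ht₁mem, ht₁0⟩ : ∃ t ∈ Set.Ioo (-ξ₁) 0, g t = 0 := by
    have hle : -ξ₁ ≤ (0:ℝ) := by linarith
    have := intermediate_value_Ioo' hle hcont.continuousOn
      (a := -ξ₁) (b := 0) (show (0:ℝ) ∈ Set.Ioo (g 0) (g (-ξ₁)) from
        ⟨hg0, by rw [v1]; exact hξ₁⟩)
    obtain ⟨t, htmem, ht0⟩ := this
    exact ⟨t, htmem, ht0⟩
  obtain ⟨tp, htpmem, htp0⟩ : ∃ t ∈ Set.Ioo (-ξm) X, g t = 0 := by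
    have hle : -ξm ≤ X := by linarith
    have := intermediate_value_Ioo hle hcont.continuousOn
      (a := -ξm) (b := X) (show (0:ℝ) ∈ Set.Ioo (g (-ξm)) (g X) from
        ⟨by rw [vm]; exact hξm, hgX⟩)
    obtain ⟨t, htmem, ht0⟩ := this
    exact ⟨t, htmem, ht0⟩
  obtain ⟨hmX2, h2x2⟩ := ht₂mem
  obtain ⟨h1x1, h1lt0⟩ := ht₁mem
  obtain ⟨hmp, hpX⟩ := htpmem
  -- polynomial root equations
  have e₂ : t₂ ^ 3 + 2 * C₁ * t₂ ^ 2 - (1 + C₃) * t₂ - C₂ ^ 2 = 0 := by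
    rw [key]; exact ht₂0
  have e₁ : t₁ ^ 3 + 2 * C₁ * t₁ ^ 2 - (1 + C₃) * t₁ - C₂ ^ 2 = 0 := by
    rw [key]; exact ht₁0
  have ep : tp ^ 3 + 2 * C₁ * tp ^ 2 - (1 + C₃) * tp - C₂ ^ 2 = 0 := by
    rw [key]; exact htp0
  -- distinctness
  have hne21 : t₂ - t₁ ≠ 0 := by
    have : t₂ < t₁ := by linarith
    exact sub_ne_zero.mpr this.ne
  have hne2p : t₂ - tp ≠ 0 := by
    have : t₂ < tp := by linarith
    exact sub_ne_zero.mpr this.ne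
  have hne1p : t₁ - tp ≠ 0 := by
    have : t₁ < tp := by linarith
    exact sub_ne_zero.mpr this.ne
  -- Vieta via elimination
  have g12 : t₂ ^ 2 + t₂ * t₁ + t₁ ^ 2 + 2 * C₁ * (t₂ + t₁) - (1 + C₃) = 0 := by
    have h : (t₂ - t₁) * (t₂ ^ 2 + t₂ * t₁ + t₁ ^ 2 + 2 * C₁ * (t₂ + t₁) - (1 + C₃)) = 0 := by
      linear_combination e₂ - e₁
    exact (mul_eq_zero.mp h).resolve_left hne21
  have g1p : t₂ ^ 2 + t₂ * tp + tp ^ 2 + 2 * C₁ * (t₂ + tp) - (1 + C₃) = 0 := by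
    have h : (t₂ - tp) * (t₂ ^ 2 + t₂ * tp + tp ^ 2 + 2 * C₁ * (t₂ + tp) - (1 + C₃)) = 0 := by
      linear_combination e₂ - ep
    exact (mul_eq_zero.mp h).resolve_left hne2p
  have hA : 2 * C₁ + (t₂ + t₁ + tp) = 0 := by
    have h : (t₁ - tp) * (2 * C₁ + (t₂ + t₁ + tp)) = 0 := by
      linear_combination g12 - g1p
    exact (mul_eq_zero.mp h).resolve_left hne1p
  have hB : (1 + C₃) + (t₂ * t₁ + t₂ * tp + t₁ * tp) = 0 := by
    linear_combination (t₂ + t₁) * hA - g12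
  have hD : C₂ ^ 2 - t₂ * t₁ * tp = 0 := by
    linear_combination -e₂ + t₂ ^ 2 * hA - t₂ * hB
  refine ⟨t₂, t₁, tp, ?_, by linarith, by linarith, by linarith, by linarith,
    by linarith, by linarith⟩
  intro x
  linear_combination x ^ 2 * hA - x * hB - hD
end
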